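/- Let δ > 0, let γ be the Gaussian measure N(0, δ·I_d) on ℝ^d (product of d centered one-dimensional Gaussians of variance δ), let σ be an invertible d×d real matrix, let x ∈ ℝ^d, and let φ : ℝ^d → ℝ be twice continuously differentiable with φ, its gradient Dφ, and its Hessian D²φ bounded. Then ∫ D²φ(x + σw) dγ(w) = (1/δ²)·(σᵀ)⁻¹ [ ∫ φ(x + σw)·(w wᵀ − δ·I_d) dγ(w) ] σ⁻¹, as an identity of d×d matrices. -/

import Mathlib

set_option maxHeartbeats 1000000

open MeasureTheory ProbabilityTheory Filter Real Set
open scoped NNReal ENNReal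

namespace GIBP

lemma sq_bound {b : ℝ} (hb : 0 < b) (t : ℝ) :
    (1 + |t|) ^ 2 * Real.exp (-b * t ^ 2) ≤ (2 + 4 / b) * Real.exp (-(b / 2) * t ^ 2) := by
  have h0 : Real.exp (-b * t ^ 2) =
      Real.exp (-(b / 2) * t ^ 2) * Real.exp (-(b / 2) * t ^ 2) := by
    rw [← Real.exp_add]; ring_nf
  have h1 : (1 + |t|) ^ 2 ≤ 2 + 2 * t ^ 2 := by
    nlinarith [sq_abs t, sq_nonneg (1 - |t|), abs_nonneg t]
  have h2 : t ^ 2 * Real.exp (-(b / 2) * t ^ 2) ≤ 2 / b := by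
    have hx := Real.add_one_le_exp ((b / 2) * t ^ 2)
    have hep : (0:ℝ) < Real.exp ((b / 2) * t ^ 2) := Real.exp_pos _
    have he : Real.exp (-(b / 2) * t ^ 2) = (Real.exp ((b / 2) * t ^ 2))⁻¹ := by
      rw [← Real.exp_neg]; ring_nf
    rw [he]
    rw [mul_inv_le_iff₀ hep]
    have hpos : (0:ℝ) < 2 / b := by positivity
    have hbb : (2 / b) * (b / 2) = 1 := by field_simp
    nlinarith [mul_le_mul_of_nonneg_left hx (le_of_lt hpos), sq_nonneg t]
  have hle1 : Real.exp (-(b / 2) * t ^ 2) ≤ 1 := by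
    rw [Real.exp_le_one_iff]
    nlinarith [sq_nonneg t]
  have h3 : (2 + 2 * t ^ 2) * Real.exp (-(b / 2) * t ^ 2) ≤ 2 + 4 / b := by
    have hexpand : (2 + 2 * t ^ 2) * Real.exp (-(b / 2) * t ^ 2)
        = 2 * Real.exp (-(b / 2) * t ^ 2) + 2 * (t ^ 2 * Real.exp (-(b / 2) * t ^ 2)) := by ring
    rw [hexpand]
    have h4b : 2 * (t ^ 2 * Real.exp (-(b / 2) * t ^ 2)) ≤ 2 * (2 / b) :=
      mul_le_mul_of_nonneg_left h2 (by norm_num)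
    have : 2 * (2 / b) = 4 / b := by ring
    linarith
  have h4 : (1 + |t|) ^ 2 * Real.exp (-(b / 2) * t ^ 2) ≤ 2 + 4 / b :=
    le_trans (mul_le_mul_of_nonneg_right h1 (Real.exp_nonneg _)) h3
  calc (1 + |t|) ^ 2 * Real.exp (-b * t ^ 2)
      = ((1 + |t|) ^ 2 * Real.exp (-(b / 2) * t ^ 2)) * Real.exp (-(b / 2) * t ^ 2) := by
        rw [h0]; ring
    _ ≤ (2 + 4 / b) * Real.exp (-(b / 2) * t ^ 2) :=
        mul_le_mul_of_nonneg_right h4 (Real.exp_nonneg _)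

lemma pdf_eq (δ : NNReal) (t : ℝ) :
    gaussianPDFReal 0 δ t
      = (Real.sqrt (2 * π * δ))⁻¹ * Real.exp (-(2 * (δ:ℝ))⁻¹ * t ^ 2) := by
  simp only [gaussianPDFReal, sub_zero]
  congr 1
  ring

lemma pdf_hasDerivAt {δ : NNReal} (hδ : 0 < δ) (t : ℝ) :
    HasDerivAt (gaussianPDFReal 0 δ) (-(t / δ) * gaussianPDFReal 0 δ t) t := by
  have hδ' : (0:ℝ) < δ := by exact_mod_cast hδ
  have hu : HasDerivAt (fun s : ℝ => -(2 * (δ:ℝ))⁻¹ * s ^ 2) (-(t / δ)) t := by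
    have := (hasDerivAt_pow 2 t).const_mul (-(2 * (δ:ℝ))⁻¹)
    refine this.congr_deriv ?_
    field_simp
    ring
  have h2 := (hu.exp).const_mul ((Real.sqrt (2 * π * δ))⁻¹)
  have hfun : (fun s : ℝ => (Real.sqrt (2 * π * δ))⁻¹ * Real.exp (-(2 * (δ:ℝ))⁻¹ * s ^ 2))
      = gaussianPDFReal 0 δ := by
    funext s; rw [pdf_eq]
  rw [hfun] at h2
  refine h2.congr_deriv ?_
  rw [pdf_eq]
  ring

lemma integral_gaussianReal_eq {δ : NNReal} (hδ : δ ≠ 0) (f : ℝ → ℝ) :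
    ∫ t, f t ∂(gaussianReal 0 δ) = ∫ t, f t * gaussianPDFReal 0 δ t := by
  rw [gaussianReal_of_var_ne_zero 0 hδ]
  have hmeas : Measurable fun x => Real.toNNReal (gaussianPDFReal 0 δ x) :=
    (measurable_gaussianPDFReal 0 δ).real_toNNReal
  have hd : (gaussianPDF 0 δ) = fun x => ((Real.toNNReal (gaussianPDFReal 0 δ x) : ℝ≥0) : ℝ≥0∞) :=
    rfl
  rw [hd, integral_withDensity_eq_integral_smul hmeas f]
  congr 1
  funext t
  rw [NNReal.smul_def, smul_eq_mul, Real.coe_toNNReal _ (gaussianPDFReal_nonneg 0 δ t)]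
  ring

lemma pdf_cont (δ : NNReal) : Continuous (gaussianPDFReal 0 δ) := by
  have : gaussianPDFReal 0 δ
      = fun t => (Real.sqrt (2 * π * δ))⁻¹ * Real.exp (-(2 * (δ:ℝ))⁻¹ * t ^ 2) :=
    funext (pdf_eq δ)
  rw [this]
  continuity

lemma integrable_dom {δ : NNReal} (hδ : 0 < δ) :
    Integrable (fun t : ℝ => (1 + |t|) ^ 2 * gaussianPDFReal 0 δ t) := by
  have hδ' : (0:ℝ) < δ := by exact_mod_cast hδ
  have hb : (0:ℝ) < (2 * (δ:ℝ))⁻¹ := by positivity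
  set b : ℝ := (2 * (δ:ℝ))⁻¹ with hbdef
  have hint : Integrable (fun t : ℝ => Real.exp (-(b / 2) * t ^ 2)) :=
    integrable_exp_neg_mul_sq (by positivity)
  apply Integrable.mono' (hint.const_mul ((Real.sqrt (2 * π * δ))⁻¹ * (2 + 4 / b)))
  · exact (((continuous_const.add continuous_abs).pow 2).mul (pdf_cont δ)).aestronglyMeasurable
  · filter_upwards with t
    have hpn := gaussianPDFReal_nonneg 0 δ t
    have h1 : ‖(1 + |t|) ^ 2 * gaussianPDFReal 0 δ t‖ = (1 + |t|) ^ 2 * gaussianPDFReal 0 δ t := by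
      rw [Real.norm_eq_abs, abs_of_nonneg]
      positivity
    rw [h1, pdf_eq]
    have hc : (0:ℝ) ≤ (Real.sqrt (2 * π * δ))⁻¹ := by positivity
    have := sq_bound hb t
    calc (1 + |t|) ^ 2 * ((Real.sqrt (2 * π * δ))⁻¹ * Real.exp (-b * t ^ 2))
        = (Real.sqrt (2 * π * δ))⁻¹ * ((1 + |t|) ^ 2 * Real.exp (-b * t ^ 2)) := by ring
      _ ≤ (Real.sqrt (2 * π * δ))⁻¹ * ((2 + 4 / b) * Real.exp (-(b / 2) * t ^ 2)) :=
          mul_le_mul_of_nonneg_left this hc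
      _ = (Real.sqrt (2 * π * δ))⁻¹ * (2 + 4 / b) * Real.exp (-(b / 2) * t ^ 2) := by ring

lemma integrable_gauss1 {δ : NNReal} (hδ : 0 < δ) (f : ℝ → ℝ)
    (hm : AEStronglyMeasurable f (volume : Measure ℝ)) (C : ℝ)
    (hb : ∀ t, |f t| ≤ C * (1 + |t|) ^ 2) : Integrable f (gaussianReal 0 δ) := by
  rw [gaussianReal_of_var_ne_zero 0 hδ.ne']
  rw [integrable_withDensity_iff (measurable_gaussianPDF 0 δ)
    (Filter.Eventually.of_forall fun x => ENNReal.ofReal_lt_top)]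
  have htoReal : ∀ t, (gaussianPDF 0 δ t).toReal = gaussianPDFReal 0 δ t := fun t =>
    ENNReal.toReal_ofReal (gaussianPDFReal_nonneg 0 δ t)
  simp only [htoReal]
  apply Integrable.mono' ((integrable_dom hδ).const_mul C)
  · exact hm.mul (pdf_cont δ).aestronglyMeasurable
  · filter_upwards with t
    have hpn := gaussianPDFReal_nonneg 0 δ t
    rw [Real.norm_eq_abs, abs_mul, abs_of_nonneg hpn]
    calc |f t| * gaussianPDFReal 0 δ t ≤ (C * (1 + |t|) ^ 2) * gaussianPDFReal 0 δ t :=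
          mul_le_mul_of_nonneg_right (hb t) hpn
      _ = C * ((1 + |t|) ^ 2 * gaussianPDFReal 0 δ t) := by ring


lemma tendsto_exp_sq_top {b : ℝ} (hb : 0 < b) :
    Tendsto (fun t : ℝ => Real.exp (-b * t ^ 2)) atTop (nhds 0) := by
  have hsq : Tendsto (fun t : ℝ => t ^ 2) atTop atTop := tendsto_pow_atTop two_ne_zero
  have hmul : Tendsto (fun u : ℝ => b * u) atTop atTop :=
    Tendsto.const_mul_atTop hb tendsto_id
  have hneg : Tendsto (fun u : ℝ => -(b * u)) atTop atBot := (tendsto_neg_atBot_iff).2 hmul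
  have := Real.tendsto_exp_atBot.comp (hneg.comp hsq)
  convert this using 2 with t
  simp [Function.comp]

lemma tendsto_exp_sq_bot {b : ℝ} (hb : 0 < b) :
    Tendsto (fun t : ℝ => Real.exp (-b * t ^ 2)) atBot (nhds 0) := by
  have h := (tendsto_exp_sq_top hb).comp tendsto_neg_atBot_atTop
  convert h using 2 with t
  simp [Function.comp]

lemma oneDim_ibp (δ : NNReal) (hδ : 0 < δ) (g : ℝ → ℝ) (hg : Differentiable ℝ g)
    (C : ℝ) (hgb : ∀ t, |g t| ≤ C * (1 + |t|)) (hg'b : ∀ t, |deriv g t| ≤ C * (1 + |t|)) :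
    ∫ t, t * g t ∂(gaussianReal 0 δ) = (δ:ℝ) * ∫ t, deriv g t ∂(gaussianReal 0 δ) := by
  have hδ' : (0:ℝ) < δ := by exact_mod_cast hδ
  have hC : 0 ≤ C := by
    have h := hgb 0
    simp only [abs_zero, add_zero, mul_one] at h
    exact le_trans (abs_nonneg _) h
  set p := gaussianPDFReal 0 δ with hpdef
  have hpnonneg : ∀ t, 0 ≤ p t := gaussianPDFReal_nonneg 0 δ
  have hb : (0:ℝ) < (2 * (δ:ℝ))⁻¹ := by positivity
  set b : ℝ := (2 * (δ:ℝ))⁻¹ with hbdef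
  set c : ℝ := (Real.sqrt (2 * π * δ))⁻¹ with hcdef
  have hcpos : (0:ℝ) ≤ c := by positivity
  have hpc : ∀ t, p t = c * Real.exp (-b * t ^ 2) := pdf_eq δ
  -- derivative of g * p
  have hderiv : ∀ t, HasDerivAt (fun s => g s * p s)
      (deriv g t * p t - t / δ * (g t * p t)) t := by
    intro t
    have h1 := ((hg t).hasDerivAt).mul (pdf_hasDerivAt hδ t)
    refine h1.congr_deriv ?_
    ring
  -- integrabilities over volume
  have hdom := integrable_dom hδ
  have hone_le : ∀ t : ℝ, (1 + |t|) ≤ (1 + |t|) ^ 2 := by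
    intro t
    nlinarith [abs_nonneg t]
  have hA : Integrable (fun t => deriv g t * p t) := by
    apply Integrable.mono' (hdom.const_mul C)
    · exact ((measurable_deriv g).aestronglyMeasurable.mul
        (pdf_cont δ).aestronglyMeasurable)
    · filter_upwards with t
      rw [Real.norm_eq_abs, abs_mul, abs_of_nonneg (hpnonneg t)]
      calc |deriv g t| * p t ≤ (C * (1 + |t|)) * p t :=
            mul_le_mul_of_nonneg_right (hg'b t) (hpnonneg t)
        _ ≤ (C * (1 + |t|) ^ 2) * p t := by
            apply mul_le_mul_of_nonneg_right _ (hpnonneg t)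
            exact mul_le_mul_of_nonneg_left (hone_le t) hC
        _ = C * ((1 + |t|) ^ 2 * p t) := by ring
  have hB : Integrable (fun t => t * g t * p t) := by
    apply Integrable.mono' (hdom.const_mul C)
    · exact ((continuous_id.mul hg.continuous).aestronglyMeasurable.mul
        (pdf_cont δ).aestronglyMeasurable)
    · filter_upwards with t
      rw [Real.norm_eq_abs, abs_mul, abs_of_nonneg (hpnonneg t), abs_mul]
      calc |t| * |g t| * p t ≤ |t| * (C * (1 + |t|)) * p t := by
            apply mul_le_mul_of_nonneg_right _ (hpnonneg t)
            exact mul_le_mul_of_nonneg_left (hgb t) (abs_nonneg t)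
        _ ≤ (C * (1 + |t|) ^ 2) * p t := by
            apply mul_le_mul_of_nonneg_right _ (hpnonneg t)
            nlinarith [abs_nonneg t]
        _ = C * ((1 + |t|) ^ 2 * p t) := by ring
  have hBdiv : Integrable (fun t => t / δ * (g t * p t)) := by
    have : (fun t => t / (δ:ℝ) * (g t * p t)) = fun t => (δ:ℝ)⁻¹ * (t * g t * p t) := by
      funext t; field_simp
    rw [this]
    exact hB.const_mul _
  have hh' : Integrable (fun t => deriv g t * p t - t / δ * (g t * p t)) := hA.sub hBdiv
  -- tendsto of g * p at ±∞
  have hbound : ∀ t, ‖g t * p t‖ ≤ c * C * (2 + 4 / b) * Real.exp (-(b / 2) * t ^ 2) := by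
    intro t
    rw [Real.norm_eq_abs, abs_mul, abs_of_nonneg (hpnonneg t), hpc t]
    calc |g t| * (c * Real.exp (-b * t ^ 2))
        ≤ (C * (1 + |t|)) * (c * Real.exp (-b * t ^ 2)) := by
          apply mul_le_mul_of_nonneg_right (hgb t)
          positivity
      _ ≤ (C * (1 + |t|) ^ 2) * (c * Real.exp (-b * t ^ 2)) := by
          apply mul_le_mul_of_nonneg_right _ (by positivity)
          exact mul_le_mul_of_nonneg_left (hone_le t) hC
      _ = (c * C) * ((1 + |t|) ^ 2 * Real.exp (-b * t ^ 2)) := by ring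
      _ ≤ (c * C) * ((2 + 4 / b) * Real.exp (-(b / 2) * t ^ 2)) := by
          apply mul_le_mul_of_nonneg_left (sq_bound hb t)
          positivity
      _ = c * C * (2 + 4 / b) * Real.exp (-(b / 2) * t ^ 2) := by ring
  have hlim_top : Tendsto (fun t => g t * p t) atTop (nhds 0) := by
    apply squeeze_zero_norm hbound
    have := (tendsto_exp_sq_top (b := b / 2) (by positivity)).const_mul (c * C * (2 + 4 / b))
    simpa using this
  have hlim_bot : Tendsto (fun t => g t * p t) atBot (nhds 0) := by
    apply squeeze_zero_norm hbound
    have := (tendsto_exp_sq_bot (b := b / 2) (by positivity)).const_mul (c * C * (2 + 4 / b))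
    simpa using this
  -- FTC on both halves
  have hIic : ∫ t in Iic (0:ℝ), (deriv g t * p t - t / δ * (g t * p t))
      = g 0 * p 0 - 0 :=
    integral_Iic_of_hasDerivAt_of_tendsto' (fun s _ => hderiv s) hh'.integrableOn hlim_bot
  have hIoi : ∫ t in Ioi (0:ℝ), (deriv g t * p t - t / δ * (g t * p t))
      = 0 - g 0 * p 0 :=
    integral_Ioi_of_hasDerivAt_of_tendsto' (fun s _ => hderiv s) hh'.integrableOn hlim_top
  have hzero : ∫ t, (deriv g t * p t - t / δ * (g t * p t)) = 0 := by
    rw [← intervalIntegral.integral_Iic_add_Ioi hh'.integrableOn hh'.integrableOn, hIic, hIoi]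
    ring
  have hsplit : ∫ t, (deriv g t * p t - t / δ * (g t * p t))
      = (∫ t, deriv g t * p t) - (δ:ℝ)⁻¹ * ∫ t, t * g t * p t := by
    rw [integral_sub hA hBdiv]
    congr 1
    have : (fun t => t / (δ:ℝ) * (g t * p t)) = fun t => (δ:ℝ)⁻¹ * (t * g t * p t) := by
      funext t; field_simp
    rw [this, integral_const_mul]
  have hkey : ∫ t, t * g t * p t = (δ:ℝ) * ∫ t, deriv g t * p t := by
    rw [hsplit] at hzero
    field_simp at hzero ⊢
    linarith
  rw [integral_gaussianReal_eq hδ.ne' (fun t => t * g t),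
    integral_gaussianReal_eq hδ.ne' (deriv g)]
  rw [show (fun t => t * g t * gaussianPDFReal 0 δ t) = fun t => t * g t * p t from rfl] at hkey
  convert hkey using 2


lemma integrable_pi_prod {n : ℕ} (μ : Measure ℝ) [IsProbabilityMeasure μ]
    (f : Fin n → ℝ → ℝ) (hf : ∀ i, Integrable (f i) μ) :
    Integrable (fun x : Fin n → ℝ => ∏ i, f i (x i)) (Measure.pi fun _ => μ) := by
  induction n with
  | zero =>
      simp only [Finset.univ_eq_empty, Finset.prod_empty]
      exact integrable_const 1
  | succ n n_ih =>
      have := ((measurePreserving_piFinSuccAbove (fun _ : Fin (n + 1) => μ) 0).symm)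
      rw [← this.integrable_comp_emb (MeasurableEquiv.measurableEmbedding _)]
      simp_rw [MeasurableEquiv.piFinSuccAbove_symm_apply, Fin.insertNthEquiv,
        Fin.prod_univ_succ, Fin.insertNth_zero]
      simp only [Fin.zero_succAbove, Function.comp_def, Fin.cons_zero, Fin.cons_succ,
        Equiv.coe_fn_mk]
      exact Integrable.mul_prod (hf 0) (n_ih (fun i => f i.succ) (fun i => hf _))

lemma one_add_norm_le_prod {d : ℕ} (w : Fin d → ℝ) :
    1 + ‖w‖ ≤ ∏ i, (1 + |w i|) := by
  rcases Nat.eq_zero_or_pos d with hd | hd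
  · subst hd
    have hw : ‖w‖ = 0 := by
      have : w = 0 := Subsingleton.elim w 0
      rw [this, norm_zero]
    simp [hw]
  · haveI : Nonempty (Fin d) := Fin.pos_iff_nonempty.1 hd
    have hne : (Finset.univ : Finset (Fin d)).Nonempty := Finset.univ_nonempty
    obtain ⟨i₀, _, hi₀⟩ := Finset.exists_mem_eq_sup Finset.univ hne fun i => ‖w i‖₊
    have hnorm : ‖w‖ = |w i₀| := by
      have h1 : ‖w‖₊ = ‖w i₀‖₊ := by rw [Pi.nnnorm_def, hi₀]
      have := congrArg (fun x : NNReal => (x : ℝ)) h1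
      simpa [Real.norm_eq_abs] using this
    rw [hnorm]
    have hprodge : (1:ℝ) ≤ ∏ x ∈ Finset.univ.erase i₀, (1 + |w x|) := by
      have := Finset.prod_le_prod (s := Finset.univ.erase i₀) (f := fun _ => (1:ℝ))
        (g := fun i => 1 + |w i|) (fun i _ => zero_le_one)
        (fun i _ => by simpa using le_add_of_nonneg_right (abs_nonneg (w i)))
      simpa using this
    rw [← Finset.mul_prod_erase Finset.univ _ (Finset.mem_univ i₀)]
    exact le_mul_of_one_le_right (by positivity) hprodge

lemma integrable_quad {d : ℕ} {δ : NNReal} (hδ : 0 < δ) (f : (Fin d → ℝ) → ℝ)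
    (hm : AEStronglyMeasurable f (Measure.pi fun _ : Fin d => gaussianReal 0 δ)) (C : ℝ)
    (hb : ∀ w, |f w| ≤ C * (1 + ‖w‖) ^ 2) :
    Integrable f (Measure.pi fun _ : Fin d => gaussianReal 0 δ) := by
  have hC : 0 ≤ C := by
    have h := hb 0
    simp only [norm_zero, add_zero, one_pow, mul_one] at h
    exact le_trans (abs_nonneg _) h
  have hint_i : Integrable (fun t : ℝ => (1 + |t|) ^ 2) (gaussianReal 0 δ) := by
    apply integrable_gauss1 hδ _ ((continuous_const.add continuous_abs).pow 2).aestronglyMeasurable 1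
    intro t
    show |(1 + |t|) ^ 2| ≤ 1 * (1 + |t|) ^ 2
    rw [abs_of_nonneg (by positivity)]
    nlinarith [abs_nonneg t]
  have hprod := integrable_pi_prod (n := d) (gaussianReal 0 δ) (fun _ t => (1 + |t|) ^ 2)
    (fun _ => hint_i)
  apply Integrable.mono' (hprod.const_mul C) hm
  filter_upwards with w
  rw [Real.norm_eq_abs]
  have key : (1 + ‖w‖) ^ 2 ≤ ∏ i, (1 + |w i|) ^ 2 := by
    rw [Finset.prod_pow]
    apply pow_le_pow_left₀ (by positivity) (one_add_norm_le_prod w)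
  calc |f w| ≤ C * (1 + ‖w‖) ^ 2 := hb w
    _ ≤ C * ∏ i, (1 + |w i|) ^ 2 := mul_le_mul_of_nonneg_left key hC


lemma multi_ibp {d : ℕ} {δ : NNReal} (hδ : 0 < δ) (j : Fin d)
    (F : (Fin d → ℝ) → ℝ) (hF : Differentiable ℝ F) (C : ℝ)
    (hFb : ∀ y, |F y| ≤ C * (1 + ‖y‖))
    (hDFb : ∀ y, |fderiv ℝ F y (Pi.single j 1)| ≤ C * (1 + ‖y‖)) :
    ∫ w, w j * F w ∂(Measure.pi fun _ : Fin d => gaussianReal 0 δ)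
      = (δ:ℝ) * ∫ w, fderiv ℝ F w (Pi.single j 1)
          ∂(Measure.pi fun _ : Fin d => gaussianReal 0 δ) := by
  classical
  have hC : 0 ≤ C := by
    have h := hFb 0
    simp only [norm_zero, add_zero, mul_one] at h
    exact le_trans (abs_nonneg _) h
  set γ : Measure (Fin d → ℝ) := Measure.pi fun _ : Fin d => gaussianReal 0 δ with hγdef
  haveI : Unique {i : Fin d // i = j} := Unique.subtypeEq j
  set B := ({i : Fin d // ¬ i = j} → ℝ) with hBdef
  set π₂ : Measure B := Measure.pi fun _ => gaussianReal 0 δ with hπ₂def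
  set e₁ := MeasurableEquiv.piEquivPiSubtypeProd (fun _ : Fin d => ℝ) (fun i => i = j)
    with he₁def
  set e₂ := MeasurableEquiv.funUnique {i : Fin d // i = j} ℝ with he₂def
  set E : (ℝ × B) ≃ᵐ (Fin d → ℝ) :=
    ((e₂.symm.prodCongr (MeasurableEquiv.refl B)).trans e₁.symm) with hEdef
  have mp₂ : MeasurePreserving (⇑e₂.symm) (gaussianReal 0 δ)
      (Measure.pi fun _ : {i : Fin d // i = j} => gaussianReal 0 δ) := by
    have h := (measurePreserving_funUnique (gaussianReal 0 δ) {i : Fin d // i = j}).symm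
    convert h <;> exact Subsingleton.elim _ _
  have mpProd : MeasurePreserving (Prod.map (⇑e₂.symm) (id : B → B))
      ((gaussianReal 0 δ).prod π₂)
      ((Measure.pi fun _ : {i : Fin d // i = j} => gaussianReal 0 δ).prod π₂) :=
    mp₂.prod (MeasurePreserving.id π₂)
  have mp₁ : MeasurePreserving (⇑e₁.symm)
      ((Measure.pi fun _ : {i : Fin d // i = j} => gaussianReal 0 δ).prod π₂) γ :=
    by
    have h := (measurePreserving_piEquivPiSubtypeProd
      (fun _ : Fin d => gaussianReal 0 δ) (fun i => i = j)).symm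
    convert h <;> exact Subsingleton.elim _ _
  have mpE : MeasurePreserving (⇑E) ((gaussianReal 0 δ).prod π₂) γ := by
    have h := mp₁.comp mpProd
    convert h using 1
    rfl
  have hE : ∀ (t : ℝ) (b : B) (i : Fin d),
      E (t, b) i = if h : i = j then t else b ⟨i, h⟩ := by
    intro t b i
    show e₁.symm (e₂.symm t, b) i = _
    simp [e₁, e₂, MeasurableEquiv.piEquivPiSubtypeProd, MeasurableEquiv.funUnique]
  have hEj : ∀ (t : ℝ) (b : B), E (t, b) j = t := by
    intro t b; rw [hE]; simp
  have hElin : ∀ (b : B) (t : ℝ),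
      E (t, b) = E (0, b) + t • (Pi.single j 1 : Fin d → ℝ) := by
    intro b t; funext i
    rcases eq_or_ne i j with h | h
    · subst h
      simp [hE, Pi.single_eq_same]
    · simp [hE, h, Pi.single_eq_of_ne h]
  have hEnorm : ∀ (t : ℝ) (b : B), ‖E (t, b)‖ ≤ 1 + |t| + ‖b‖ := by
    intro t b
    refine (pi_norm_le_iff_of_nonneg (by positivity)).2 fun i => ?_
    rw [hE]
    split_ifs with h
    · rw [Real.norm_eq_abs]
      linarith [norm_nonneg b]
    · refine le_trans (norm_le_pi_norm b ⟨i, h⟩) ?_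
      linarith [abs_nonneg t]
  have hslice_deriv : ∀ (b : B) (t : ℝ),
      HasDerivAt (fun s => F (E (s, b))) (fderiv ℝ F (E (t, b)) (Pi.single j 1)) t := by
    intro b t
    have hline : HasDerivAt (fun s : ℝ => E (0, b) + s • (Pi.single j 1 : Fin d → ℝ))
        (Pi.single j 1) t := by
      have h1 : HasDerivAt (fun s : ℝ => s • (Pi.single j 1 : Fin d → ℝ))
          ((1:ℝ) • (Pi.single j 1 : Fin d → ℝ)) t := (hasDerivAt_id t).smul_const _
      simpa using h1.const_add (E (0, b))
    have hEq : (fun s : ℝ => F (E (s, b)))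
        = fun s => F (E (0, b) + s • (Pi.single j 1 : Fin d → ℝ)) := by
      funext s; rw [hElin b s]
    rw [hEq]
    have h2 := (hF (E (0, b) + t • (Pi.single j 1 : Fin d → ℝ))).hasFDerivAt.comp_hasDerivAt
      t hline
    rw [← hElin b t] at h2
    exact h2
  -- integrabilities
  have hIA : Integrable (fun w => w j * F w) γ := by
    apply integrable_quad hδ _ ((continuous_apply j).mul hF.continuous).aestronglyMeasurable C
    intro w
    show |w j * F w| ≤ _
    rw [abs_mul]
    have h1 : |w j| ≤ ‖w‖ := by
      have := norm_le_pi_norm w j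
      simpa [Real.norm_eq_abs] using this
    calc |w j| * |F w| ≤ ‖w‖ * (C * (1 + ‖w‖)) :=
          mul_le_mul h1 (hFb w) (abs_nonneg _) (norm_nonneg _)
      _ ≤ C * (1 + ‖w‖) ^ 2 := by nlinarith [norm_nonneg w]
  have hIB : Integrable (fun w => fderiv ℝ F w (Pi.single j 1)) γ := by
    apply integrable_quad hδ _
      (measurable_fderiv_apply_const ℝ F (Pi.single j 1)).aestronglyMeasurable C
    intro w
    calc |fderiv ℝ F w (Pi.single j 1)| ≤ C * (1 + ‖w‖) := hDFb w
      _ ≤ C * (1 + ‖w‖) ^ 2 := by nlinarith [norm_nonneg w, hC, mul_nonneg hC (norm_nonneg w)]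
  have hfun1 : ((fun w => w j * F w) ∘ ⇑E) = fun z : ℝ × B => z.1 * F (E z) := by
    funext z
    rcases z with ⟨t, b⟩
    show E (t, b) j * F (E (t, b)) = t * F (E (t, b))
    rw [hEj]
  have hIA' : Integrable (fun z : ℝ × B => z.1 * F (E z)) ((gaussianReal 0 δ).prod π₂) := by
    have h := (mpE.integrable_comp_emb E.measurableEmbedding).2 hIA
    exact h.congr (Filter.Eventually.of_forall fun z => congrFun hfun1 z)
  have hIB' : Integrable (fun z : ℝ × B => fderiv ℝ F (E z) (Pi.single j 1))
      ((gaussianReal 0 δ).prod π₂) :=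
    (mpE.integrable_comp_emb E.measurableEmbedding).2 hIB
  have hb1 : ∀ (b : B) (t : ℝ), 1 + ‖E (t, b)‖ ≤ (2 + ‖b‖) * (1 + |t|) := by
    intro b t
    have h := hEnorm t b
    nlinarith [abs_nonneg t, norm_nonneg b, mul_nonneg (norm_nonneg b) (abs_nonneg t)]
  calc ∫ w, w j * F w ∂γ
      = ∫ z : ℝ × B, z.1 * F (E z) ∂((gaussianReal 0 δ).prod π₂) := by
        rw [← mpE.integral_comp E.measurableEmbedding (fun w => w j * F w)]
        exact integral_congr_ae (Filter.Eventually.of_forall fun z => congrFun hfun1 z)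
    _ = ∫ b, ∫ t, t * F (E (t, b)) ∂(gaussianReal 0 δ) ∂π₂ :=
        integral_prod_symm _ hIA'
    _ = ∫ b, (δ:ℝ) * ∫ t, fderiv ℝ F (E (t, b)) (Pi.single j 1) ∂(gaussianReal 0 δ) ∂π₂ := by
        apply integral_congr_ae (Filter.Eventually.of_forall fun b => ?_)
        have hg : Differentiable ℝ (fun s => F (E (s, b))) :=
          fun t => (hslice_deriv b t).differentiableAt
        have hderiv_eq : deriv (fun s => F (E (s, b)))
            = fun t => fderiv ℝ F (E (t, b)) (Pi.single j 1) :=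
          funext fun t => (hslice_deriv b t).deriv
        have hbnd1 : ∀ t : ℝ, |F (E (t, b))| ≤ (C * (2 + ‖b‖)) * (1 + |t|) := by
          intro t
          calc |F (E (t, b))| ≤ C * (1 + ‖E (t, b)‖) := hFb _
            _ ≤ C * ((2 + ‖b‖) * (1 + |t|)) := mul_le_mul_of_nonneg_left (hb1 b t) hC
            _ = (C * (2 + ‖b‖)) * (1 + |t|) := by ring
        have hbnd2 : ∀ t : ℝ, |deriv (fun s => F (E (s, b))) t| ≤ (C * (2 + ‖b‖)) * (1 + |t|) := by
          intro t
          rw [hderiv_eq]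
          calc |fderiv ℝ F (E (t, b)) (Pi.single j 1)| ≤ C * (1 + ‖E (t, b)‖) := hDFb _
            _ ≤ C * ((2 + ‖b‖) * (1 + |t|)) := mul_le_mul_of_nonneg_left (hb1 b t) hC
            _ = (C * (2 + ‖b‖)) * (1 + |t|) := by ring
        have hone := oneDim_ibp δ hδ (fun s => F (E (s, b))) hg (C * (2 + ‖b‖)) hbnd1 hbnd2
        rw [hone, hderiv_eq]
    _ = (δ:ℝ) * ∫ b, ∫ t, fderiv ℝ F (E (t, b)) (Pi.single j 1) ∂(gaussianReal 0 δ) ∂π₂ :=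
        integral_const_mul _ _
    _ = (δ:ℝ) * ∫ z : ℝ × B, fderiv ℝ F (E z) (Pi.single j 1) ∂((gaussianReal 0 δ).prod π₂) := by
        rw [integral_prod_symm _ hIB']
    _ = (δ:ℝ) * ∫ w, fderiv ℝ F w (Pi.single j 1) ∂γ := by
        rw [mpE.integral_comp E.measurableEmbedding (fun w => fderiv ℝ F w (Pi.single j 1))]


lemma quad_of_const {C r v : ℝ} (hC : 0 ≤ C) (hr : 0 ≤ r) (h : v ≤ C) :
    v ≤ C * (1 + r) ^ 2 := by
  nlinarith [mul_nonneg hC hr, mul_nonneg (mul_nonneg hC hr) hr]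

lemma quad_of_lin {C r v : ℝ} (hC : 0 ≤ C) (hr : 0 ≤ r) (h : v ≤ C * r) :
    v ≤ C * (1 + r) ^ 2 := by
  nlinarith [mul_nonneg hC hr, mul_nonneg (mul_nonneg hC hr) hr]

lemma quad_of_sq {C r v : ℝ} (hC : 0 ≤ C) (hr : 0 ≤ r) (h : v ≤ C * (r * r)) :
    v ≤ C * (1 + r) ^ 2 := by
  nlinarith [mul_nonneg hC hr, mul_nonneg (mul_nonneg hC hr) hr]

lemma lin_of_const {C C' r v : ℝ} (hC' : 0 ≤ C') (hr : 0 ≤ r) (hCC' : C ≤ C')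
    (h : v ≤ C) : v ≤ C' * (1 + r) := by
  nlinarith [mul_nonneg hC' hr]

lemma lin_of_lin {C C' r v : ℝ} (hC' : 0 ≤ C') (hr : 0 ≤ r) (hCC' : C ≤ C')
    (h : v ≤ C * r) : v ≤ C' * (1 + r) := by
  nlinarith [mul_nonneg (sub_nonneg.2 hCC') hr]

lemma clm_eval_expand {d : ℕ} (A : (Fin d → ℝ) →L[ℝ] ℝ) (v : Fin d → ℝ) :
    A v = ∑ a, v a * A (Pi.single a 1) := by
  have hv : v = ∑ a, v a • (Pi.single a 1 : Fin d → ℝ) := by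
    funext i
    rw [Finset.sum_apply]
    simp [Pi.single_apply, mul_ite, Finset.sum_ite_eq]
  conv_lhs => rw [hv]
  rw [map_sum]
  simp [smul_eq_mul]

end GIBP

open GIBP

/-- Second-order Gaussian integration by parts (Malliavin) representation:
for `γ = N(0, δ·I_d)`, `σ` invertible and `φ` a `C²` function with `φ`, `Dφ`, `D²φ` bounded,
`∫ D²φ(x + σw) dγ(w) = (1/δ²)·(σᵀ)⁻¹ [∫ φ(x + σw)·(w wᵀ − δ·I_d) dγ(w)] σ⁻¹`
as an identity of `d×d` matrices (entrywise). -/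
theorem gaussian_ibp_second_order
    {d : ℕ} (δ : NNReal) (hδ : 0 < δ)
    (γ : Measure (Fin d → ℝ)) (hγ : γ = Measure.pi fun _ : Fin d => gaussianReal 0 δ)
    (σ : Matrix (Fin d) (Fin d) ℝ) (hσ : IsUnit σ.det)
    (x : Fin d → ℝ) (φ : (Fin d → ℝ) → ℝ) (hφ : ContDiff ℝ 2 φ)
    (hφbdd : ∃ C, ∀ y, |φ y| ≤ C)
    (hDφbdd : ∃ C, ∀ y, ‖fderiv ℝ φ y‖ ≤ C)
    (hD2φbdd : ∃ C, ∀ y, ‖fderiv ℝ (fderiv ℝ φ) y‖ ≤ C)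
    (M : Matrix (Fin d) (Fin d) ℝ)
    (hM : ∀ j k, M j k = ∫ w, φ (x + σ.mulVec w) *
      (Matrix.vecMulVec w w - (δ : ℝ) • (1 : Matrix (Fin d) (Fin d) ℝ)) j k ∂γ) :
    ∀ i j, ∫ w, fderiv ℝ (fderiv ℝ φ) (x + σ.mulVec w) (Pi.single i 1) (Pi.single j 1) ∂γ
      = (((δ : ℝ) ^ 2)⁻¹ • (σ.transpose⁻¹ * M * σ⁻¹)) i j := by
  subst hγ
  set γ : Measure (Fin d → ℝ) := Measure.pi fun _ : Fin d => gaussianReal 0 δ with hγdef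
  obtain ⟨C₀, hC₀⟩ := hφbdd
  obtain ⟨C₁, hC₁⟩ := hDφbdd
  obtain ⟨C₂, hC₂⟩ := hD2φbdd
  have hC₀0 : 0 ≤ C₀ := le_trans (abs_nonneg _) (hC₀ 0)
  have hC₁0 : 0 ≤ C₁ := le_trans (norm_nonneg _) (hC₁ 0)
  have hC₂0 : 0 ≤ C₂ := le_trans (norm_nonneg (fderiv ℝ (fderiv ℝ φ) 0)) (hC₂ 0)
  have hδ' : (0:ℝ) < δ := by exact_mod_cast hδ
  have hφ1 : Differentiable ℝ φ := hφ.differentiable two_ne_zero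
  have hφ' : ContDiff ℝ 1 (fderiv ℝ φ) := hφ.fderiv_right (m := 1) (by norm_num)
  have hφ'' : Differentiable ℝ (fderiv ℝ φ) := hφ'.differentiable one_ne_zero
  have hD2cont : Continuous (fderiv ℝ (fderiv ℝ φ)) := hφ'.continuous_fderiv one_ne_zero
  set L : (Fin d → ℝ) →L[ℝ] (Fin d → ℝ) :=
    LinearMap.toContinuousLinearMap (Matrix.mulVecLin σ) with hLdef
  have hLw : ∀ w, σ.mulVec w = L w := fun w => rfl
  simp only [hLw] at hM ⊢
  have hsingle : ∀ a : Fin d, ‖(Pi.single a (1:ℝ) : Fin d → ℝ)‖ = 1 := by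
    intro a; rw [Pi.norm_single, norm_one]
  have hLs : ∀ a : Fin d, ‖L (Pi.single a 1)‖ ≤ ‖L‖ := by
    intro a
    have := L.le_opNorm (Pi.single a 1)
    rwa [hsingle a, mul_one] at this
  have hLnn : (0:ℝ) ≤ ‖L‖ := norm_nonneg L
  have haff : ∀ w : Fin d → ℝ, HasFDerivAt (fun w => x + L w) L w := fun w =>
    L.hasFDerivAt.const_add x
  set ψ : (Fin d → ℝ) → ℝ := fun w => φ (x + L w) with hψdef
  have hψd : ∀ w : Fin d → ℝ,
      HasFDerivAt ψ ((fderiv ℝ φ (x + L w)).comp L) w := fun w =>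
    HasFDerivAt.comp w (hφ1 (x + L w)).hasFDerivAt (haff w)
  have hψdiff : Differentiable ℝ ψ := fun w => (hψd w).differentiableAt
  have hψcont : Continuous ψ := hψdiff.continuous
  have hDcomp : ∀ w : Fin d → ℝ,
      HasFDerivAt (fun w => fderiv ℝ φ (x + L w))
        ((fderiv ℝ (fderiv ℝ φ) (x + L w)).comp L) w := fun w =>
    HasFDerivAt.comp w (hφ'' (x + L w)).hasFDerivAt (haff w)
  -- basic integrability facts
  have hIψ : Integrable ψ γ := by
    apply integrable_quad hδ ψ hψcont.aestronglyMeasurable C₀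
    intro w
    exact quad_of_const hC₀0 (norm_nonneg w) (hC₀ (x + L w))
  have hD2cont' : ∀ a b : Fin d, Continuous
      (fun w => fderiv ℝ (fderiv ℝ φ) (x + L w) (Pi.single a 1) (Pi.single b 1)) := by
    intro a b
    have h1 : Continuous (fun w : Fin d → ℝ => fderiv ℝ (fderiv ℝ φ) (x + L w)) :=
      hD2cont.comp (continuous_const.add L.continuous)
    exact ((ContinuousLinearMap.apply ℝ ℝ
        ((Pi.single b 1 : Fin d → ℝ))).continuous).comp
      (((ContinuousLinearMap.apply ℝ ((Fin d → ℝ) →L[ℝ] ℝ)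
        ((Pi.single a 1 : Fin d → ℝ))).continuous).comp h1)
  have hD2bdd : ∀ (w : Fin d → ℝ) (a b : Fin d),
      |fderiv ℝ (fderiv ℝ φ) (x + L w) (Pi.single a 1) (Pi.single b 1)| ≤ C₂ := by
    intro w a b
    have ha := (fderiv ℝ (fderiv ℝ φ) (x + L w)).le_opNorm (Pi.single a 1)
    have hb := ((fderiv ℝ (fderiv ℝ φ) (x + L w)) (Pi.single a 1)).le_opNorm
      (Pi.single b 1)
    rw [hsingle, mul_one] at ha hb
    calc |fderiv ℝ (fderiv ℝ φ) (x + L w) (Pi.single a 1) (Pi.single b 1)|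
        ≤ ‖(fderiv ℝ (fderiv ℝ φ) (x + L w)) (Pi.single a 1)‖ := hb
      _ ≤ ‖fderiv ℝ (fderiv ℝ φ) (x + L w)‖ := ha
      _ ≤ C₂ := hC₂ _
  have hID2 : ∀ a b : Fin d, Integrable
      (fun w => fderiv ℝ (fderiv ℝ φ) (x + L w) (Pi.single a 1) (Pi.single b 1)) γ := by
    intro a b
    apply integrable_quad hδ _ (hD2cont' a b).aestronglyMeasurable C₂
    intro w
    exact quad_of_const hC₂0 (norm_nonneg w) (hD2bdd w a b)
  -- the key identity
  have key : ∀ j k : Fin d, M j k = (δ:ℝ)^2 *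
      ∑ a, σ a k * ∑ b, σ b j *
        (∫ w, fderiv ℝ (fderiv ℝ φ) (x + L w) (Pi.single a 1) (Pi.single b 1) ∂γ) := by
    intro j k
    set F₂ : (Fin d → ℝ) → ℝ := fun w => fderiv ℝ φ (x + L w) (L (Pi.single j 1)) with hF₂def
    have hF₂cont : Continuous F₂ := by
      have h1 : Continuous (fun w : Fin d → ℝ => fderiv ℝ φ (x + L w)) :=
        (hφ'.continuous).comp (continuous_const.add L.continuous)
      exact ((ContinuousLinearMap.apply ℝ ℝ (L (Pi.single j 1))).continuous).comp h1
    have hF₂b : ∀ y, |F₂ y| ≤ C₁ * ‖L‖ := by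
      intro y
      have h1 := (fderiv ℝ φ (x + L y)).le_opNorm (L (Pi.single j 1))
      calc |F₂ y| ≤ ‖fderiv ℝ φ (x + L y)‖ * ‖L (Pi.single j 1)‖ := h1
        _ ≤ C₁ * ‖L‖ := mul_le_mul (hC₁ _) (hLs j) (norm_nonneg _) hC₁0
    have habs : ∀ (r : Fin d) (y : Fin d → ℝ), |y r| ≤ ‖y‖ := by
      intro r y
      have := norm_le_pi_norm y r
      simpa [Real.norm_eq_abs] using this
    -- first derivative formula for F₁ = ψ * (· k)
    have hF₁d : ∀ w : Fin d → ℝ, HasFDerivAt (fun w => ψ w * w k)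
        (ψ w • ContinuousLinearMap.proj (R := ℝ) (φ := fun _ : Fin d => ℝ) k
          + (w k) • ((fderiv ℝ φ (x + L w)).comp L)) w := fun w =>
      (hψd w).mul (hasFDerivAt_apply k w)
    have hF₁deval : ∀ w : Fin d → ℝ,
        fderiv ℝ (fun w => ψ w * w k) w (Pi.single j 1)
          = F₂ w * w k + (1 : Matrix (Fin d) (Fin d) ℝ) j k * ψ w := by
      intro w
      rw [(hF₁d w).fderiv]
      simp only [ContinuousLinearMap.add_apply, ContinuousLinearMap.smul_apply,
        ContinuousLinearMap.proj_apply, ContinuousLinearMap.comp_apply, smul_eq_mul]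
      rw [Matrix.one_apply, Pi.single_apply]
      have hF2w : fderiv ℝ φ (x + L w) (L (Pi.single j 1)) = F₂ w := rfl
      rw [hF2w]
      rcases eq_or_ne j k with h | h
      · rw [if_pos h.symm, if_pos h]; ring
      · rw [if_neg (Ne.symm h), if_neg h]; ring
    have hIψjk : Integrable (fun w => ψ w * (w j * w k)) γ := by
      apply integrable_quad hδ _ (hψcont.mul
        ((continuous_apply j).mul (continuous_apply k))).aestronglyMeasurable C₀
      intro w
      show |ψ w * (w j * w k)| ≤ _
      rw [abs_mul, abs_mul]
      have h3 := hC₀ (x + L w)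
      calc |ψ w| * (|w j| * |w k|) ≤ C₀ * (‖w‖ * ‖w‖) := by
            apply mul_le_mul h3 _ (by positivity) hC₀0
            exact mul_le_mul (habs j w) (habs k w) (abs_nonneg _) (norm_nonneg _)
        _ ≤ C₀ * (1 + ‖w‖)^2 := quad_of_sq hC₀0 (norm_nonneg w) le_rfl
    have hIF₂k : Integrable (fun w => F₂ w * w k) γ := by
      apply integrable_quad hδ _ (hF₂cont.mul (continuous_apply k)).aestronglyMeasurable
        (C₁ * ‖L‖)
      intro w
      show |F₂ w * w k| ≤ _
      rw [abs_mul]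
      calc |F₂ w| * |w k| ≤ (C₁ * ‖L‖) * ‖w‖ :=
            mul_le_mul (hF₂b w) (habs k w) (abs_nonneg _) (by positivity)
        _ ≤ (C₁ * ‖L‖) * (1 + ‖w‖)^2 :=
            quad_of_lin (mul_nonneg hC₁0 hLnn) (norm_nonneg w) le_rfl
    -- first integration by parts
    have hibp1 := multi_ibp hδ j (fun w => ψ w * w k)
      (fun w => (hF₁d w).differentiableAt) (C₀ + C₁ * ‖L‖) ?_ ?_
    rotate_left
    · intro y
      rw [abs_mul]
      have h3 := hC₀ (x + L y)
      calc |ψ y| * |y k| ≤ C₀ * ‖y‖ :=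
            mul_le_mul h3 (habs k y) (abs_nonneg _) hC₀0
        _ ≤ (C₀ + C₁ * ‖L‖) * (1 + ‖y‖) :=
            lin_of_lin (by positivity) (norm_nonneg y)
              (le_add_of_nonneg_right (mul_nonneg hC₁0 hLnn)) le_rfl
    · intro y
      rw [hF₁deval y]
      have h3 := hC₀ (x + L y)
      have h4 : |F₂ y * y k| ≤ (C₁ * ‖L‖) * ‖y‖ := by
        rw [abs_mul]
        exact mul_le_mul (hF₂b y) (habs k y) (abs_nonneg _) (by positivity)
      have h5 : |(1 : Matrix (Fin d) (Fin d) ℝ) j k * ψ y| ≤ C₀ := by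
        rw [abs_mul, Matrix.one_apply]
        rcases eq_or_ne j k with h | h
        · rw [if_pos h, abs_one, one_mul]; exact h3
        · rw [if_neg h, abs_zero, zero_mul]; exact hC₀0
      calc |F₂ y * y k + (1 : Matrix (Fin d) (Fin d) ℝ) j k * ψ y|
          ≤ |F₂ y * y k| + |(1 : Matrix (Fin d) (Fin d) ℝ) j k * ψ y| := abs_add_le _ _
        _ ≤ (C₁ * ‖L‖) * ‖y‖ + C₀ := by linarith
        _ ≤ (C₀ + C₁ * ‖L‖) * (1 + ‖y‖) := by
            nlinarith [norm_nonneg y, mul_nonneg hC₁0 hLnn,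
              mul_nonneg hC₀0 (norm_nonneg y)]
    -- assemble step 1
    have hMjk : M j k = (∫ w, ψ w * (w j * w k) ∂γ)
        - ((δ:ℝ) * (1 : Matrix (Fin d) (Fin d) ℝ) j k) * ∫ w, ψ w ∂γ := by
      rw [hM j k]
      have hent : ∀ w : Fin d → ℝ, ψ w *
          (Matrix.vecMulVec w w - (δ:ℝ) • (1 : Matrix (Fin d) (Fin d) ℝ)) j k
          = ψ w * (w j * w k)
            - ((δ:ℝ) * (1 : Matrix (Fin d) (Fin d) ℝ) j k) * ψ w := by
        intro w
        rw [Matrix.sub_apply, Matrix.smul_apply, Matrix.vecMulVec_apply, smul_eq_mul]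
        ring
      rw [integral_congr_ae (Filter.Eventually.of_forall hent)]
      rw [integral_sub hIψjk (hIψ.const_mul _), integral_const_mul]
    have hcomm : (fun w : Fin d → ℝ => ψ w * (w j * w k))
        = fun w => w j * (ψ w * w k) := funext fun w => by ring
    have hsum : ∫ w, fderiv ℝ (fun w => ψ w * w k) w (Pi.single j 1) ∂γ
        = (∫ w, F₂ w * w k ∂γ)
          + (1 : Matrix (Fin d) (Fin d) ℝ) j k * ∫ w, ψ w ∂γ := by
      rw [show (fun w => fderiv ℝ (fun w => ψ w * w k) w (Pi.single j 1))
        = fun w => F₂ w * w k + (1 : Matrix (Fin d) (Fin d) ℝ) j k * ψ w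
        from funext hF₁deval]
      rw [integral_add hIF₂k (hIψ.const_mul _), integral_const_mul]
    have hstep1 : M j k = (δ:ℝ) * ∫ w, F₂ w * w k ∂γ := by
      rw [hMjk, hcomm, hibp1, hsum]
      ring
    -- second integration by parts
    have hF₂d : ∀ w : Fin d → ℝ, HasFDerivAt F₂
        (((fderiv ℝ (fderiv ℝ φ) (x + L w)).comp L).flip (L (Pi.single j 1))) w := by
      intro w
      have h := (hDcomp w).clm_apply (hasFDerivAt_const (L (Pi.single j 1)) w)
      simpa using h
    have hF₂deval : ∀ w : Fin d → ℝ, fderiv ℝ F₂ w (Pi.single k 1)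
        = fderiv ℝ (fderiv ℝ φ) (x + L w) (L (Pi.single k 1)) (L (Pi.single j 1)) := by
      intro w
      rw [(hF₂d w).fderiv]
      simp [ContinuousLinearMap.flip_apply]
    have hibp2 := multi_ibp hδ k F₂ (fun w => (hF₂d w).differentiableAt)
      (C₁ * ‖L‖ + C₂ * ‖L‖ * ‖L‖) ?_ ?_
    rotate_left
    · intro y
      calc |F₂ y| ≤ C₁ * ‖L‖ := hF₂b y
        _ ≤ (C₁ * ‖L‖ + C₂ * ‖L‖ * ‖L‖) * (1 + ‖y‖) :=
            lin_of_const (by positivity) (norm_nonneg y)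
              (le_add_of_nonneg_right (mul_nonneg (mul_nonneg hC₂0 hLnn) hLnn)) le_rfl
    · intro y
      rw [hF₂deval y]
      have ha := (fderiv ℝ (fderiv ℝ φ) (x + L y)).le_opNorm (L (Pi.single k 1))
      have hb := ((fderiv ℝ (fderiv ℝ φ) (x + L y)) (L (Pi.single k 1))).le_opNorm
        (L (Pi.single j 1))
      have h6 : |fderiv ℝ (fderiv ℝ φ) (x + L y) (L (Pi.single k 1)) (L (Pi.single j 1))|
          ≤ C₂ * ‖L‖ * ‖L‖ := by
        calc |fderiv ℝ (fderiv ℝ φ) (x + L y) (L (Pi.single k 1)) (L (Pi.single j 1))|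
            ≤ ‖(fderiv ℝ (fderiv ℝ φ) (x + L y)) (L (Pi.single k 1))‖ * ‖L (Pi.single j 1)‖ := hb
          _ ≤ (‖fderiv ℝ (fderiv ℝ φ) (x + L y)‖ * ‖L (Pi.single k 1)‖) * ‖L (Pi.single j 1)‖ := by
              apply mul_le_mul_of_nonneg_right ha (norm_nonneg _)
          _ ≤ (C₂ * ‖L‖) * ‖L‖ := by
              apply mul_le_mul _ (hLs j) (norm_nonneg _) (mul_nonneg hC₂0 hLnn)
              exact mul_le_mul (hC₂ _) (hLs k) (norm_nonneg _) hC₂0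
      calc |fderiv ℝ (fderiv ℝ φ) (x + L y) (L (Pi.single k 1)) (L (Pi.single j 1))|
          ≤ C₂ * ‖L‖ * ‖L‖ := h6
        _ ≤ (C₁ * ‖L‖ + C₂ * ‖L‖ * ‖L‖) * (1 + ‖y‖) :=
            lin_of_const (by positivity) (norm_nonneg y)
              (le_add_of_nonneg_left (mul_nonneg hC₁0 hLnn)) le_rfl
    have hcomm2 : (fun w : Fin d → ℝ => F₂ w * w k) = fun w => w k * F₂ w :=
      funext fun w => by ring
    -- expansion of the second derivative in coordinates
    have hL1 : ∀ (a r : Fin d), (L (Pi.single a 1)) r = σ r a := by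
      intro a r
      rw [← hLw]
      rw [Matrix.mulVec_single_one]
      rfl
    have hexpand : ∀ w : Fin d → ℝ,
        fderiv ℝ (fderiv ℝ φ) (x + L w) (L (Pi.single k 1)) (L (Pi.single j 1))
        = ∑ a, σ a k * ∑ b, σ b j *
            (fderiv ℝ (fderiv ℝ φ) (x + L w) (Pi.single a 1) (Pi.single b 1)) := by
      intro w
      set D := fderiv ℝ (fderiv ℝ φ) (x + L w) with hD
      have houter : D (L (Pi.single k 1)) (L (Pi.single j 1))
          = ∑ a, (L (Pi.single k 1)) a * (D (Pi.single a 1) (L (Pi.single j 1))) := by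
        have h := clm_eval_expand (D.flip (L (Pi.single j 1))) (L (Pi.single k 1))
        simpa [ContinuousLinearMap.flip_apply] using h
      rw [houter]
      apply Finset.sum_congr rfl
      intro a _
      rw [hL1 k a]
      congr 1
      have h := clm_eval_expand (D (Pi.single a 1)) (L (Pi.single j 1))
      rw [h]
      apply Finset.sum_congr rfl
      intro b _
      rw [hL1 j b]
    have hintexp : ∫ w, fderiv ℝ F₂ w (Pi.single k 1) ∂γ
        = ∑ a, σ a k * ∑ b, σ b j *
            (∫ w, fderiv ℝ (fderiv ℝ φ) (x + L w) (Pi.single a 1) (Pi.single b 1) ∂γ) := by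
      rw [show (fun w => fderiv ℝ F₂ w (Pi.single k 1))
        = fun w => ∑ a, σ a k * ∑ b, σ b j *
            (fderiv ℝ (fderiv ℝ φ) (x + L w) (Pi.single a 1) (Pi.single b 1))
        from funext fun w => by rw [hF₂deval w, hexpand w]]
      rw [integral_finset_sum _ (fun a _ =>
        ((integrable_finset_sum _ (fun b _ => (hID2 a b).const_mul (σ b j))).const_mul
          (σ a k)))]
      apply Finset.sum_congr rfl
      intro a _
      rw [integral_const_mul]
      congr 1
      rw [integral_finset_sum _ (fun b _ => (hID2 a b).const_mul (σ b j))]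
      apply Finset.sum_congr rfl
      intro b _
      rw [integral_const_mul]
    rw [hstep1, hcomm2, hibp2, hintexp]
    ring
  -- matrix algebra conclusion
  intro i j
  set Hm : Matrix (Fin d) (Fin d) ℝ := Matrix.of fun a b =>
    ∫ w, fderiv ℝ (fderiv ℝ φ) (x + L w) (Pi.single a 1) (Pi.single b 1) ∂γ with hHmdef
  have hMsym : M i j = M j i := by
    rw [hM i j, hM j i]
    congr 1
    funext w
    have h1 : (Matrix.vecMulVec w w - (δ:ℝ) • (1 : Matrix (Fin d) (Fin d) ℝ)) i j
        = (Matrix.vecMulVec w w - (δ:ℝ) • (1 : Matrix (Fin d) (Fin d) ℝ)) j i := by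
      rw [Matrix.sub_apply, Matrix.sub_apply, Matrix.vecMulVec_apply, Matrix.vecMulVec_apply,
        Matrix.smul_apply, Matrix.smul_apply, Matrix.one_apply, Matrix.one_apply]
      rcases eq_or_ne i j with h | h
      · subst h; ring
      · rw [if_neg h, if_neg (Ne.symm h)]; ring
    rw [h1]
  have hMeq : M = (δ:ℝ)^2 • (σ.transpose * Hm * σ) := by
    apply Matrix.ext
    intro r s
    have hsym : M r s = M s r := by
      rw [hM r s, hM s r]
      congr 1
      funext w
      have h1 : (Matrix.vecMulVec w w - (δ:ℝ) • (1 : Matrix (Fin d) (Fin d) ℝ)) r s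
          = (Matrix.vecMulVec w w - (δ:ℝ) • (1 : Matrix (Fin d) (Fin d) ℝ)) s r := by
        rw [Matrix.sub_apply, Matrix.sub_apply, Matrix.vecMulVec_apply, Matrix.vecMulVec_apply,
          Matrix.smul_apply, Matrix.smul_apply, Matrix.one_apply, Matrix.one_apply]
        rcases eq_or_ne r s with h | h
        · subst h; ring
        · rw [if_neg h, if_neg (Ne.symm h)]; ring
      rw [h1]
    rw [hsym, key s r]
    rw [Matrix.smul_apply, smul_eq_mul]
    congr 1
    rw [Matrix.mul_apply]
    simp_rw [Matrix.mul_apply, Matrix.transpose_apply, Finset.sum_mul, Finset.mul_sum]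
    rw [Finset.sum_comm]
    apply Finset.sum_congr rfl
    intro a _
    apply Finset.sum_congr rfl
    intro b _
    simp only [hHmdef, Matrix.of_apply]
    ring
  have hσT : IsUnit σ.transpose.det := by rwa [Matrix.det_transpose]
  have hinv : σ.transpose⁻¹ * ((δ:ℝ)^2 • (σ.transpose * Hm * σ)) * σ⁻¹
      = (δ:ℝ)^2 • Hm := by
    rw [Matrix.mul_smul, Matrix.smul_mul]
    congr 1
    rw [Matrix.mul_assoc σ.transpose Hm σ,
      ← Matrix.mul_assoc σ.transpose⁻¹ σ.transpose (Hm * σ),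
      Matrix.nonsing_inv_mul _ hσT, Matrix.one_mul,
      Matrix.mul_assoc Hm σ σ⁻¹, Matrix.mul_nonsing_inv _ hσ, Matrix.mul_one]
  rw [hMeq, hinv, smul_smul, inv_mul_cancel₀ (by positivity), one_smul]
  rfl
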